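/- For every (z,σ) ∈ ℝ^N ∖ {(0,0)} one has 𝓛_{α,2}(ρ)(z,σ) = ((Q−1)/ρ(z,σ)) · (Φ⁰(z)/ρ(z,σ))^{2α}, where Q = m + (α+1)k. -/

import Mathlib

/-! For a Minkowski norm `N` and `z ≠ 0`, the gradient of the dual norm `N⁰` at `z` is the
maximizer `ξ` of `⟪z, ·⟫` on `{N = 1}` (Danskin; the maximizer is unique by strict convexity of
`N²`), and Lagrange multipliers give `∇N(ξ) = z / N⁰(z)`. Hence, with `p = 2(α+1)` and
`ρ^p = Φ⁰(z)^p + 4(α+1)²Ψ⁰(σ)²`, the fields `Φ(∇_z ρ)∇Φ(∇_z ρ)` and `Ψ(∇_σ ρ)∇Ψ(∇_σ ρ)` are the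
radial fields `ρ^{1-p} Φ⁰(z)^{2α} z` and `4(α+1) ρ^{1-p} σ`. The divergence of `v • id` is
`n v + ⟪∇v, ·⟫`, and Euler's identity `⟪∇N⁰(z), z⟫ = N⁰(z)` together with the formula for `ρ^p`
collapses the sum to `(Q - 1) ρ^{1-p} Φ⁰(z)^{2α}`. Where `z = 0` the `z`-field is `o(|z|)`, so
both sides vanish there. -/

open Real MeasureTheory
open scoped RealInnerProductSpace

noncomputable section

abbrev Euc (n : ℕ) := EuclideanSpace ℝ (Fin n)

/-- A Minkowski norm on `ℝⁿ`: nonnegative, absolutely homogeneous, with `N²` of class `C²`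
away from the origin and strictly convex. -/
def IsMinkowskiNorm {n : ℕ} (N : Euc n → ℝ) : Prop :=
  (∀ x, 0 ≤ N x) ∧ (∀ (l : ℝ) (x : Euc n), N (l • x) = |l| * N x) ∧
  ContDiffOn ℝ 2 (fun x => (N x) ^ 2) {(0 : Euc n)}ᶜ ∧
  StrictConvexOn ℝ Set.univ (fun x => (N x) ^ 2)

/-- The Legendre transform (dual norm) `N⁰(x) = sup { ⟨x,ξ⟩ : N(ξ) = 1 }`. -/
def dualNorm {n : ℕ} (N : Euc n → ℝ) (x : Euc n) : ℝ :=
  sSup ((fun ξ => ⟪x, ξ⟫) '' {ξ | N ξ = 1})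

variable {m k : ℕ}

/-- The dual anisotropic Minkowski gauge
`ρ(z,σ) = (Φ⁰(z)^{2(α+1)} + 4(α+1)²Ψ⁰(σ)²)^{1/(2(α+1))}`. -/
def rho (α : ℝ) (Φ : Euc m → ℝ) (Ψ : Euc k → ℝ) (x : Euc m × Euc k) : ℝ :=
  (dualNorm Φ x.1 ^ (2 * (α + 1)) + 4 * (α + 1) ^ 2 * dualNorm Ψ x.2 ^ 2) ^ (1 / (2 * (α + 1)))

/-- Gradient in the `z` variables. -/
def gradZ (u : Euc m × Euc k → ℝ) (x : Euc m × Euc k) : Euc m :=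
  gradient (fun z => u (z, x.2)) x.1

/-- Gradient in the `σ` variables. -/
def gradS (u : Euc m × Euc k → ℝ) (x : Euc m × Euc k) : Euc k :=
  gradient (fun σ => u (x.1, σ)) x.2

/-- Divergence in the `z` variables. -/
def divZ (V : Euc m × Euc k → Euc m) (x : Euc m × Euc k) : ℝ :=
  ∑ i, fderiv ℝ (fun z => V (z, x.2) i) x.1 (EuclideanSpace.single i 1)

/-- Divergence in the `σ` variables. -/
def divS (V : Euc m × Euc k → Euc k) (x : Euc m × Euc k) : ℝ :=
  ∑ i, fderiv ℝ (fun σ => V (x.1, σ) i) x.2 (EuclideanSpace.single i 1)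

/-- The Finsler Laplacian in the `z` variables, `Δ_Φ(u) = div_z(Φ(∇_z u) ∇Φ(∇_z u))`. -/
def finslerLapZ (Φ : Euc m → ℝ) (u : Euc m × Euc k → ℝ) (x : Euc m × Euc k) : ℝ :=
  divZ (fun y => Φ (gradZ u y) • gradient Φ (gradZ u y)) x

/-- The Finsler Laplacian in the `σ` variables, `Δ_Ψ(u) = div_σ(Ψ(∇_σ u) ∇Ψ(∇_σ u))`. -/
def finslerLapS (Ψ : Euc k → ℝ) (u : Euc m × Euc k → ℝ) (x : Euc m × Euc k) : ℝ :=
  divS (fun y => Ψ (gradS u y) • gradient Ψ (gradS u y)) x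

/-- The operator `𝓛_{α,p}`. -/
def Lop (α p : ℝ) (Φ : Euc m → ℝ) (Ψ : Euc k → ℝ) (u : Euc m × Euc k → ℝ)
    (x : Euc m × Euc k) : ℝ :=
  divZ (fun y =>
      (Φ (gradZ u y) ^ 2 + dualNorm Φ y.1 ^ (2 * α) / 4 * Ψ (gradS u y) ^ 2) ^ ((p - 2) / 2) •
        (Φ (gradZ u y) • gradient Φ (gradZ u y))) x
  + divS (fun y =>
      (Φ (gradZ u y) ^ 2 + dualNorm Φ y.1 ^ (2 * α) / 4 * Ψ (gradS u y) ^ 2) ^ ((p - 2) / 2) •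
        ((dualNorm Φ y.1 ^ (2 * α) / 4 * Ψ (gradS u y)) • gradient Ψ (gradS u y))) x

/-- The operator `𝓛_{α,2}(u) = Δ_Φ(u) + (Φ⁰(z)^{2α}/4) Δ_Ψ(u)`. -/
def Lop2 (α : ℝ) (Φ : Euc m → ℝ) (Ψ : Euc k → ℝ) (u : Euc m × Euc k → ℝ)
    (x : Euc m × Euc k) : ℝ :=
  finslerLapZ Φ u x + dualNorm Φ x.1 ^ (2 * α) / 4 * finslerLapS Ψ u x

open Filter Topology

theorem inv_norm_smul_mem_sphere {E : Type*} [NormedAddCommGroup E] [NormedSpace ℝ E] {x : E}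
    (hx : x ≠ 0) : ‖x‖⁻¹ • x ∈ Metric.sphere (0 : E) 1 := by
  simpa using norm_smul_inv_norm (𝕜 := ℝ) hx

namespace IsMinkowskiNorm

variable {n : ℕ} {N : Euc n → ℝ}

theorem nonneg (hN : IsMinkowskiNorm N) (x : Euc n) : 0 ≤ N x := hN.1 x

theorem map_smul (hN : IsMinkowskiNorm N) (l : ℝ) (x : Euc n) : N (l • x) = |l| * N x :=
  hN.2.1 l x

theorem map_smul_of_nonneg (hN : IsMinkowskiNorm N) {l : ℝ} (hl : 0 ≤ l) (x : Euc n) :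
    N (l • x) = l * N x := by
  rw [hN.map_smul, abs_of_nonneg hl]

theorem map_zero (hN : IsMinkowskiNorm N) : N 0 = 0 := by
  simpa using hN.map_smul 0 0

theorem map_neg (hN : IsMinkowskiNorm N) (x : Euc n) : N (-x) = N x := by
  simpa using hN.map_smul (-1) x

theorem pos (hN : IsMinkowskiNorm N) {x : Euc n} (hx : x ≠ 0) : 0 < N x := by
  have hne : x ≠ -x := fun h => hx (by
    rw [eq_neg_iff_add_eq_zero, ← two_smul ℝ] at h; simpa using h)
  have h := hN.2.2.2.2 (Set.mem_univ x) (Set.mem_univ (-x)) hne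
    (by norm_num : (0 : ℝ) < 1 / 2) (by norm_num : (0 : ℝ) < 1 / 2) (by norm_num)
  simp only [smul_neg, add_neg_cancel, hN.map_zero, hN.map_neg, smul_eq_mul] at h
  nlinarith [hN.nonneg x]

theorem map_inv_smul_self (hN : IsMinkowskiNorm N) {x : Euc n} (hx : x ≠ 0) :
    N ((N x)⁻¹ • x) = 1 := by
  rw [hN.map_smul_of_nonneg (inv_nonneg.mpr (hN.nonneg x)), inv_mul_cancel₀ (hN.pos hx).ne']

theorem differentiableAt (hN : IsMinkowskiNorm N) {x : Euc n} (hx : x ≠ 0) :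
    DifferentiableAt ℝ N x := by
  have hsq : ContDiffAt ℝ 2 (fun y => N y ^ 2) x :=
    hN.2.2.1.contDiffAt (isOpen_compl_singleton.mem_nhds hx)
  have hsqrt : ContDiffAt ℝ 2 (fun y => √(N y ^ 2)) x :=
    (contDiffAt_sqrt (pow_pos (hN.pos hx) 2).ne').comp x hsq
  simp only [Real.sqrt_sq (hN.nonneg _)] at hsqrt
  exact hsqrt.differentiableAt (by norm_num)

theorem eq_norm_mul (hN : IsMinkowskiNorm N) (x : Euc n) : N x = ‖x‖ * N (‖x‖⁻¹ • x) := by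
  rcases eq_or_ne x 0 with rfl | hx
  · simp [hN.map_zero]
  · rw [hN.map_smul_of_nonneg (inv_nonneg.mpr (norm_nonneg x)),
      mul_inv_cancel_left₀ (norm_ne_zero_iff.mpr hx)]

theorem continuousOn_sphere (hN : IsMinkowskiNorm N) : ContinuousOn N (Metric.sphere 0 1) :=
  fun x hx =>
    (hN.differentiableAt (ne_zero_of_mem_unit_sphere ⟨x, hx⟩)).continuousAt.continuousWithinAt

theorem exists_le_mul_norm (hN : IsMinkowskiNorm N) : ∃ C, ∀ x, N x ≤ C * ‖x‖ := by
  obtain ⟨C, hC⟩ :=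
    (isCompact_sphere (0 : Euc n) 1).exists_bound_of_continuousOn hN.continuousOn_sphere
  refine ⟨C, fun x => ?_⟩
  rcases eq_or_ne x 0 with rfl | hx
  · simp [hN.map_zero]
  · rw [hN.eq_norm_mul x, mul_comm C]
    exact mul_le_mul_of_nonneg_left ((le_abs_self _).trans (hC _ (inv_norm_smul_mem_sphere hx)))
      (norm_nonneg x)

theorem exists_mul_norm_le (hN : IsMinkowskiNorm N) : ∃ c > 0, ∀ x, c * ‖x‖ ≤ N x := by
  rcases (Metric.sphere (0 : Euc n) 1).eq_empty_or_nonempty with hS | hS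
  · refine ⟨1, one_pos, fun x => ?_⟩
    rcases eq_or_ne x 0 with rfl | hx
    · simp [hN.map_zero]
    · simpa [hS] using inv_norm_smul_mem_sphere hx
  obtain ⟨ξ, hξ, hmin⟩ := (isCompact_sphere (0 : Euc n) 1).exists_isMinOn hS hN.continuousOn_sphere
  refine ⟨N ξ, hN.pos (ne_zero_of_mem_unit_sphere ⟨ξ, hξ⟩), fun x => ?_⟩
  rcases eq_or_ne x 0 with rfl | hx
  · simp [hN.map_zero]
  · rw [hN.eq_norm_mul x, mul_comm (N ξ)]
    exact mul_le_mul_of_nonneg_left (hmin (inv_norm_smul_mem_sphere hx)) (norm_nonneg x)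

theorem continuous (hN : IsMinkowskiNorm N) : Continuous N := by
  obtain ⟨C, hC⟩ := hN.exists_le_mul_norm
  refine continuous_iff_continuousAt.mpr fun x => ?_
  rcases eq_or_ne x 0 with rfl | hx
  · rw [ContinuousAt, hN.map_zero]
    exact squeeze_zero hN.nonneg hC
      ((continuous_const.mul continuous_norm).tendsto' (0 : Euc n) 0 (by simp))
  · exact (hN.differentiableAt hx).continuousAt

theorem exists_norm_le (hN : IsMinkowskiNorm N) : ∃ R, 0 ≤ R ∧ ∀ ξ, N ξ = 1 → ‖ξ‖ ≤ R := by
  obtain ⟨c, hc, h⟩ := hN.exists_mul_norm_le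
  refine ⟨c⁻¹, inv_nonneg.mpr hc.le, fun ξ hξ => ?_⟩
  have := (le_inv_mul_iff₀ hc).mpr (h ξ)
  rwa [hξ, mul_one] at this

theorem isCompact_setOf_eq_one (hN : IsMinkowskiNorm N) : IsCompact {ξ : Euc n | N ξ = 1} := by
  obtain ⟨R, -, hR⟩ := hN.exists_norm_le
  exact Metric.isCompact_of_isClosed_isBounded (isClosed_singleton.preimage hN.continuous)
    ((Metric.isBounded_closedBall (x := 0) (r := R)).subset fun ξ hξ => by simpa using hR ξ hξ)

end IsMinkowskiNorm

section DualNorm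

variable {n : ℕ} {N : Euc n → ℝ}

theorem dualNorm_zero : dualNorm N 0 = 0 := by
  simp only [dualNorm, inner_zero_left]
  rcases Set.eq_empty_or_nonempty {ξ : Euc n | N ξ = 1} with h | h
  · rw [h, Set.image_empty, Real.sSup_empty]
  · rw [h.image_const, csSup_singleton]

theorem dualNorm_le {z : Euc n} {b : ℝ} (hb : 0 ≤ b) (h : ∀ ξ, N ξ = 1 → ⟪z, ξ⟫ ≤ b) :
    dualNorm N z ≤ b :=
  Real.sSup_le (by rintro _ ⟨ξ, hξ, rfl⟩; exact h ξ hξ) hb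

namespace IsMinkowskiNorm

theorem bddAbove_inner (hN : IsMinkowskiNorm N) (z : Euc n) :
    BddAbove ((fun ξ => ⟪z, ξ⟫) '' {ξ | N ξ = 1}) := by
  obtain ⟨R, -, hR⟩ := hN.exists_norm_le
  refine ⟨‖z‖ * R, ?_⟩
  rintro _ ⟨ξ, hξ, rfl⟩
  exact (real_inner_le_norm z ξ).trans (mul_le_mul_of_nonneg_left (hR ξ hξ) (norm_nonneg z))

theorem inner_le_dualNorm (hN : IsMinkowskiNorm N) (z : Euc n) {ξ : Euc n} (hξ : N ξ = 1) :
    ⟪z, ξ⟫ ≤ dualNorm N z :=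
  le_csSup (hN.bddAbove_inner z) ⟨ξ, hξ, rfl⟩

theorem inner_le_dualNorm_mul (hN : IsMinkowskiNorm N) (z w : Euc n) :
    ⟪z, w⟫ ≤ dualNorm N z * N w := by
  rcases eq_or_ne w 0 with rfl | hw
  · simp [hN.map_zero]
  · have h := hN.inner_le_dualNorm z (hN.map_inv_smul_self hw)
    rwa [real_inner_smul_right, inv_mul_le_iff₀ (hN.pos hw), mul_comm] at h

theorem dualNorm_pos (hN : IsMinkowskiNorm N) {z : Euc n} (hz : z ≠ 0) : 0 < dualNorm N z := by
  have h := hN.inner_le_dualNorm z (hN.map_inv_smul_self hz)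
  rw [real_inner_smul_right, real_inner_self_eq_norm_sq] at h
  have := hN.pos hz
  have := norm_pos_iff.mpr hz
  exact lt_of_lt_of_le (by positivity) h

theorem dualNorm_nonneg (hN : IsMinkowskiNorm N) (z : Euc n) : 0 ≤ dualNorm N z := by
  rcases eq_or_ne z 0 with rfl | hz
  · exact dualNorm_zero.ge
  · exact (hN.dualNorm_pos hz).le

theorem exists_dualNorm_le_add_mul (hN : IsMinkowskiNorm N) :
    ∃ R, 0 ≤ R ∧ ∀ z z', dualNorm N z' ≤ dualNorm N z + R * ‖z' - z‖ := by
  obtain ⟨R, hR, hRξ⟩ := hN.exists_norm_le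
  refine ⟨R, hR, fun z z' => ?_⟩
  refine dualNorm_le (add_nonneg (hN.dualNorm_nonneg z) (by positivity)) fun ξ hξ => ?_
  calc ⟪z', ξ⟫ = ⟪z, ξ⟫ + ⟪z' - z, ξ⟫ := by rw [inner_sub_left]; ring
    _ ≤ dualNorm N z + R * ‖z' - z‖ := by
      gcongr
      · exact hN.inner_le_dualNorm z hξ
      · rw [mul_comm]
        exact (real_inner_le_norm _ _).trans (mul_le_mul_of_nonneg_left (hRξ ξ hξ) (norm_nonneg _))

theorem continuous_dualNorm (hN : IsMinkowskiNorm N) : Continuous (dualNorm N) := by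
  obtain ⟨R, hR, h⟩ := hN.exists_dualNorm_le_add_mul
  refine (LipschitzWith.of_le_add_mul R.toNNReal fun z' z => ?_).continuous
  rw [Real.coe_toNNReal _ hR, dist_eq_norm]
  exact h z z'

theorem dualNorm_isBigO (hN : IsMinkowskiNorm N) :
    dualNorm N =O[𝓝 0] fun z => z := by
  obtain ⟨R, -, h⟩ := hN.exists_dualNorm_le_add_mul
  refine Asymptotics.IsBigO.of_bound R (Filter.Eventually.of_forall fun z => ?_)
  have := h 0 z
  rw [dualNorm_zero, zero_add, sub_zero] at this
  rwa [Real.norm_eq_abs, abs_of_nonneg (hN.dualNorm_nonneg z)]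

end IsMinkowskiNorm

end DualNorm

def IsDualMax {n : ℕ} (N : Euc n → ℝ) (z ξ : Euc n) : Prop :=
  N ξ = 1 ∧ ⟪z, ξ⟫ = dualNorm N z

section DualMax

variable {n : ℕ} {N : Euc n → ℝ} {z ξ : Euc n}

theorem IsMinkowskiNorm.exists_isDualMax [Nontrivial (Euc n)] (hN : IsMinkowskiNorm N)
    (z : Euc n) : ∃ ξ, IsDualMax N z ξ := by
  obtain ⟨w, hw⟩ := exists_ne (0 : Euc n)
  obtain ⟨ξ, hξ, hmax⟩ := hN.isCompact_setOf_eq_one.exists_isMaxOn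
    ⟨_, hN.map_inv_smul_self hw⟩
    (continuous_const.inner continuous_id : Continuous fun w : Euc n => ⟪z, w⟫).continuousOn
  refine ⟨ξ, hξ, le_antisymm (hN.inner_le_dualNorm z hξ) ?_⟩
  exact csSup_le (Set.Nonempty.image _ ⟨ξ, hξ⟩) (by rintro _ ⟨η, hη, rfl⟩; exact hmax hη)

namespace IsDualMax

theorem ne_zero (hN : IsMinkowskiNorm N) (h : IsDualMax N z ξ) : ξ ≠ 0 := by
  rintro rfl
  simpa [hN.map_zero] using h.1

/-- Strict convexity of `N²`: the midpoint of two maximizers would have `N < 1`. -/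
theorem unique (hN : IsMinkowskiNorm N) (hz : z ≠ 0) {ξ₁ ξ₂ : Euc n} (h₁ : IsDualMax N z ξ₁)
    (h₂ : IsDualMax N z ξ₂) : ξ₁ = ξ₂ := by
  by_contra hne
  have hconv := hN.2.2.2.2 (Set.mem_univ ξ₁) (Set.mem_univ ξ₂) hne
    (by norm_num : (0 : ℝ) < 1 / 2) (by norm_num : (0 : ℝ) < 1 / 2) (by norm_num)
  simp only [smul_eq_mul, h₁.1, h₂.1] at hconv
  have hmid := hN.inner_le_dualNorm_mul z ((1 / 2 : ℝ) • ξ₁ + (1 / 2 : ℝ) • ξ₂)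
  rw [inner_add_right, real_inner_smul_right, real_inner_smul_right, h₁.2, h₂.2] at hmid
  nlinarith [hN.dualNorm_pos hz, hN.nonneg ((1 / 2 : ℝ) • ξ₁ + (1 / 2 : ℝ) • ξ₂)]

theorem exists_gap (hN : IsMinkowskiNorm N) (hz : z ≠ 0) (h : IsDualMax N z ξ) {ε : ℝ}
    (hε : 0 < ε) : ∃ D > 0, ∀ w, N w = 1 → ε ≤ ‖w - ξ‖ → ⟪z, w⟫ + D ≤ dualNorm N z := by
  set S := {w : Euc n | N w = 1} ∩ {w | ε ≤ ‖w - ξ‖}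
  rcases S.eq_empty_or_nonempty with hS | hS
  · exact ⟨1, one_pos, fun w hw hwε => absurd (show w ∈ S from ⟨hw, hwε⟩) (by simp [hS])⟩
  have hScpt : IsCompact S := hN.isCompact_setOf_eq_one.inter_right
    (isClosed_le continuous_const (continuous_id.sub continuous_const).norm)
  obtain ⟨w₀, ⟨hw₀, hw₀ε⟩, hmax⟩ :=
    hScpt.exists_isMaxOn hS
      (continuous_const.inner continuous_id : Continuous fun w : Euc n => ⟪z, w⟫).continuousOn
  have hlt : ⟪z, w₀⟫ < dualNorm N z := by
    refine (hN.inner_le_dualNorm z hw₀).lt_of_ne fun heq => ?_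
    have hfar : ε ≤ ‖w₀ - ξ‖ := hw₀ε
    rw [h.unique hN hz ⟨hw₀, heq⟩, sub_self, norm_zero] at hfar
    linarith
  exact ⟨dualNorm N z - ⟪z, w₀⟫, by linarith, fun w hw hwε => by
    linarith [show ⟪z, w⟫ ≤ ⟪z, w₀⟫ from hmax ⟨hw, hwε⟩]⟩

theorem stable (hN : IsMinkowskiNorm N) (hz : z ≠ 0) (h : IsDualMax N z ξ) {ε : ℝ}
    (hε : 0 < ε) : ∃ δ > 0, ∀ z' ξ', ‖z' - z‖ < δ → IsDualMax N z' ξ' → ‖ξ' - ξ‖ < ε := by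
  obtain ⟨D, hD, hgap⟩ := h.exists_gap hN hz hε
  obtain ⟨R, hR, hRξ⟩ := hN.exists_norm_le
  refine ⟨D / (2 * R + 1), by positivity, fun z' ξ' hz' h' => ?_⟩
  by_contra! hfar
  have hbound : ∀ η, N η = 1 → |⟪z' - z, η⟫| ≤ R * ‖z' - z‖ := fun η hη =>
    (abs_real_inner_le_norm _ _).trans (by rw [mul_comm]; gcongr; exact hRξ η hη)
  have h₁ := abs_le.mp (hbound ξ h.1)
  have h₂ := abs_le.mp (hbound ξ' h'.1)
  have h₃ := hgap ξ' h'.1 hfar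
  have h₄ := hN.inner_le_dualNorm z' h.1
  rw [inner_sub_left] at h₁ h₂
  rw [h'.2] at h₂
  rw [h.2] at h₁
  have hδ : (2 * R + 1) * ‖z' - z‖ < D := (lt_div_iff₀' (by positivity)).mp hz'
  nlinarith [norm_nonneg (z' - z)]

/-- Danskin's argument: `⟪ξ, z' - z⟫ ≤ N⁰ z' - N⁰ z ≤ ⟪ξ', z' - z⟫` for maximizers `ξ, ξ'`
at `z, z'`, and `ξ' → ξ` as `z' → z`. -/
theorem hasGradientAt (hN : IsMinkowskiNorm N) (hz : z ≠ 0) (h : IsDualMax N z ξ) :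
    HasGradientAt (dualNorm N) ξ z := by
  have := nontrivial_of_ne z 0 hz
  rw [hasGradientAt_iff_isLittleO, Asymptotics.isLittleO_iff]
  intro c hc
  obtain ⟨δ, hδ, hstab⟩ := h.stable hN hz hc
  filter_upwards [Metric.ball_mem_nhds z hδ] with z' hz'
  obtain ⟨ξ', h'⟩ := hN.exists_isDualMax z'
  have hlow : ⟪ξ, z' - z⟫ ≤ dualNorm N z' - dualNorm N z := by
    rw [real_inner_comm, inner_sub_left, h.2]
    linarith [hN.inner_le_dualNorm z' h.1]
  have hup : dualNorm N z' - dualNorm N z ≤ ⟪ξ', z' - z⟫ := by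
    rw [real_inner_comm, inner_sub_left, h'.2]
    linarith [hN.inner_le_dualNorm z h'.1]
  have hclose : ⟪ξ' - ξ, z' - z⟫ ≤ c * ‖z' - z‖ :=
    (real_inner_le_norm _ _).trans (mul_le_mul_of_nonneg_right
      (hstab z' ξ' (by rwa [← dist_eq_norm]) h').le (norm_nonneg _))
  rw [inner_sub_left] at hclose
  rw [Real.norm_eq_abs, abs_le]
  constructor <;> nlinarith [norm_nonneg (z' - z)]

/-- Lagrange multipliers: `ξ` minimizes `w ↦ N⁰(z) N(w) - ⟪z, w⟫`. -/
theorem gradient_eq (hN : IsMinkowskiNorm N) (hz : z ≠ 0) (h : IsDualMax N z ξ) :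
    gradient N ξ = (dualNorm N z)⁻¹ • z := by
  have hd := (hN.differentiableAt (h.ne_zero hN)).hasGradientAt
  have hmin : IsLocalMin (fun w => dualNorm N z * N w - ⟪z, w⟫) ξ :=
    Filter.Eventually.of_forall fun w => by
      simp only [h.1, mul_one, h.2, sub_self]
      linarith [hN.inner_le_dualNorm_mul z w]
  have hF := (hasGradientAt_iff_hasFDerivAt.mp hd).const_mul (dualNorm N z) |>.sub
    (innerSL ℝ z).hasFDerivAt
  have h0 := hmin.hasFDerivAt_eq_zero hF
  have hlin : dualNorm N z • gradient N ξ = z := by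
    refine ext_inner_right ℝ fun v => ?_
    have := congrArg (fun L => L v) h0
    simp only [sub_apply, smul_apply, InnerProductSpace.toDual_apply_apply,
      innerSL_apply_apply, smul_eq_mul, zero_apply] at this
    rw [real_inner_smul_left]
    linarith
  rwa [eq_inv_smul_iff₀ (hN.dualNorm_pos hz).ne']

end IsDualMax

end DualMax

section GradientCalculus

variable {F : Type*} [NormedAddCommGroup F] [InnerProductSpace ℝ F] [CompleteSpace F]
  {f g : F → ℝ} {f' g' x : F}

theorem HasGradientAt.rpow_const (hf : HasGradientAt f f' x) {p : ℝ} (h : f x ≠ 0 ∨ 1 ≤ p) :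
    HasGradientAt (fun w => f w ^ p) ((p * f x ^ (p - 1)) • f') x := by
  rw [hasGradientAt_iff_hasFDerivAt] at hf ⊢
  simpa using hf.rpow_const h

theorem HasGradientAt.const_mul (hf : HasGradientAt f f' x) (c : ℝ) :
    HasGradientAt (fun w => c * f w) (c • f') x := by
  rw [hasGradientAt_iff_hasFDerivAt] at hf ⊢
  simpa using hf.const_mul c

theorem HasGradientAt.add_const (hf : HasGradientAt f f' x) (c : ℝ) :
    HasGradientAt (fun w => f w + c) f' x := by
  rw [hasGradientAt_iff_hasFDerivAt] at hf ⊢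
  exact hf.add_const c

theorem HasGradientAt.const_add (hf : HasGradientAt f f' x) (c : ℝ) :
    HasGradientAt (fun w => c + f w) f' x := by
  rw [hasGradientAt_iff_hasFDerivAt] at hf ⊢
  exact hf.const_add c

theorem HasGradientAt.mul (hf : HasGradientAt f f' x) (hg : HasGradientAt g g' x) :
    HasGradientAt (fun w => f w * g w) (f x • g' + g x • f') x := by
  rw [hasGradientAt_iff_hasFDerivAt] at hf hg ⊢
  simpa using hf.fun_mul hg

theorem HasGradientAt.rpow_one_div (hf : HasGradientAt f f' x) (hx : 0 < f x) {p : ℝ}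
    (hp : p ≠ 0) :
    HasGradientAt (fun w => f w ^ (1 / p)) (((f x ^ (1 / p)) ^ (1 - p) / p) • f') x := by
  convert hf.rpow_const (p := 1 / p) (Or.inl hx.ne') using 2
  rw [← Real.rpow_mul hx.le]
  field_simp

end GradientCalculus

section DualNormGradient

variable {n : ℕ} {N : Euc n → ℝ} {z : Euc n}

namespace IsMinkowskiNorm

theorem isDualMax_gradient_dualNorm (hN : IsMinkowskiNorm N) (hz : z ≠ 0) :
    IsDualMax N z (gradient (dualNorm N) z) := by
  have := nontrivial_of_ne z 0 hz
  obtain ⟨ξ, hξ⟩ := hN.exists_isDualMax z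
  rwa [(hξ.hasGradientAt hN hz).gradient]

theorem hasGradientAt_dualNorm (hN : IsMinkowskiNorm N) (hz : z ≠ 0) :
    HasGradientAt (dualNorm N) (gradient (dualNorm N) z) z :=
  (hN.isDualMax_gradient_dualNorm hz).hasGradientAt hN hz

theorem inner_gradient_dualNorm_self (hN : IsMinkowskiNorm N) (z : Euc n) :
    ⟪gradient (dualNorm N) z, z⟫ = dualNorm N z := by
  rcases eq_or_ne z 0 with rfl | hz
  · rw [inner_zero_right, dualNorm_zero]
  · rw [real_inner_comm]
    exact (hN.isDualMax_gradient_dualNorm hz).2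

theorem gradient_smul_of_pos (hN : IsMinkowskiNorm N) {c : ℝ} (hc : 0 < c) {v : Euc n}
    (hv : v ≠ 0) : gradient N (c • v) = gradient N v := by
  have hd : HasFDerivAt N (fderiv ℝ N v) (c⁻¹ • c • v) := by
    rw [inv_smul_smul₀ hc.ne']
    exact (hN.differentiableAt hv).hasFDerivAt
  have hcomp := (hd.comp (c • v) ((hasFDerivAt_id (c • v)).const_smul c⁻¹)).const_mul c
  have heq : (fun w => c * N (c⁻¹ • w)) = N := funext fun w => by
    rw [hN.map_smul_of_nonneg (inv_nonneg.mpr hc.le), mul_inv_cancel_left₀ hc.ne']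
  have hL : c • (fderiv ℝ N v).comp (c⁻¹ • ContinuousLinearMap.id ℝ (Euc n)) = fderiv ℝ N v := by
    ext w
    simp [hc.ne']
  simp only [Function.comp_def, heq, hL] at hcomp
  rw [gradient, hcomp.fderiv, gradient]

/-- The Legendre maps `ξ ↦ N ξ • ∇N ξ` and `z ↦ N⁰ z • ∇N⁰ z` are mutually inverse. -/
theorem smul_gradient_smul_gradient_dualNorm (hN : IsMinkowskiNorm N) {a : ℝ} (ha : 0 ≤ a)
    (z : Euc n) :
    N ((a * dualNorm N z) • gradient (dualNorm N) z) •
        gradient N ((a * dualNorm N z) • gradient (dualNorm N) z) = a • z := by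
  rcases eq_or_ne z 0 with rfl | hz
  · simp [dualNorm_zero, hN.map_zero]
  rcases ha.eq_or_lt with rfl | ha
  · simp [hN.map_zero]
  have h := hN.isDualMax_gradient_dualNorm hz
  have hpos := hN.dualNorm_pos hz
  have hc : 0 < a * dualNorm N z := mul_pos ha hpos
  rw [hN.map_smul_of_nonneg hc.le, h.1, mul_one, hN.gradient_smul_of_pos hc (h.ne_zero hN),
    h.gradient_eq hN hz, smul_smul, mul_assoc, mul_inv_cancel₀ hpos.ne', mul_one]

end IsMinkowskiNorm

end DualNormGradient

theorem hasFDerivAt_mul_of_tendsto_zero {E : Type*} [NormedAddCommGroup E] [NormedSpace ℝ E]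
    {u v : E → ℝ} (hu : Tendsto u (𝓝 0) (𝓝 0)) (hv : v =O[𝓝 0] fun w => w) (hv0 : v 0 = 0) :
    HasFDerivAt (fun w => u w * v w) (0 : E →L[ℝ] ℝ) 0 := by
  rw [hasFDerivAt_iff_isLittleO_nhds_zero]
  simp only [zero_add, hv0, mul_zero, sub_zero, zero_apply]
  have := ((Asymptotics.isLittleO_one_iff ℝ).mpr hu).mul_isBigO hv.norm_right
  simp only [one_mul] at this
  exact this.of_norm_right

theorem sum_fderiv_mul_apply_single {n : ℕ} {u : Euc n → ℝ} {G y : Euc n}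
    (hu : HasGradientAt u G y) :
    ∑ i, fderiv ℝ (fun w : Euc n => u w * w i) y (EuclideanSpace.single i 1) =
      n * u y + ⟪G, y⟫ := by
  have hterm : ∀ i, fderiv ℝ (fun w : Euc n => u w * w i) y (EuclideanSpace.single i 1) =
      u y + G i * y i := by
    intro i
    have hi : HasFDerivAt (fun w : Euc n => w i) (EuclideanSpace.proj (𝕜 := ℝ) i) y :=
      (EuclideanSpace.proj (𝕜 := ℝ) (ι := Fin n) i).hasFDerivAt
    rw [((hasGradientAt_iff_hasFDerivAt.mp hu).fun_mul hi).fderiv]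
    simp [EuclideanSpace.inner_single_right]
    ring
  rw [Finset.sum_congr rfl fun i _ => hterm i, Finset.sum_add_distrib]
  simp [PiLp.inner_apply, mul_comm]

namespace IsMinkowskiNorm

variable {n : ℕ} {N : Euc n → ℝ}

theorem hasGradientAt_dualNorm_rpow (hN : IsMinkowskiNorm N) {p : ℝ} (hp : 1 < p)
    (z : Euc n) :
    HasGradientAt (fun w => dualNorm N w ^ p)
      ((p * dualNorm N z ^ (p - 1)) • gradient (dualNorm N) z) z := by
  rcases eq_or_ne z 0 with rfl | hz
  · rw [dualNorm_zero, Real.zero_rpow (by linarith), mul_zero, zero_smul,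
      hasGradientAt_iff_hasFDerivAt, _root_.map_zero]
    have hu : Tendsto (fun w => dualNorm N w ^ (p - 1)) (𝓝 0) (𝓝 0) := by
      have := (hN.continuous_dualNorm.tendsto 0).rpow_const (Or.inr (by linarith : 0 ≤ p - 1))
      rwa [dualNorm_zero, Real.zero_rpow (by linarith)] at this
    have heq : (fun w => dualNorm N w ^ p) = fun w => dualNorm N w ^ (p - 1) * dualNorm N w :=
      funext fun w => by
        rw [← Real.rpow_add_one' (hN.dualNorm_nonneg w) (by linarith), sub_add_cancel]
    rw [heq]
    exact hasFDerivAt_mul_of_tendsto_zero hu hN.dualNorm_isBigO dualNorm_zero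
  · exact (hN.hasGradientAt_dualNorm hz).rpow_const (Or.inl (hN.dualNorm_pos hz).ne')

theorem hasGradientAt_dualNorm_sq (hN : IsMinkowskiNorm N) (z : Euc n) :
    HasGradientAt (fun w => dualNorm N w ^ 2) ((2 * dualNorm N z) • gradient (dualNorm N) z) z := by
  have h := hN.hasGradientAt_dualNorm_rpow one_lt_two z
  norm_num only [Real.rpow_two, Real.rpow_one] at h
  exact h

end IsMinkowskiNorm

section Gauge

variable {α : ℝ} {Φ : Euc m → ℝ} {Ψ : Euc k → ℝ} {z : Euc m} {σ : Euc k}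

theorem rho_base_pos (hΦ : IsMinkowskiNorm Φ) (hΨ : IsMinkowskiNorm Ψ) (hα : 0 < α)
    (hx : (z, σ) ≠ 0) :
    0 < dualNorm Φ z ^ (2 * (α + 1)) + 4 * (α + 1) ^ 2 * dualNorm Ψ σ ^ 2 := by
  have h₁ := Real.rpow_nonneg (hΦ.dualNorm_nonneg z) (2 * (α + 1))
  rcases eq_or_ne z 0 with rfl | hz
  · have hσ : σ ≠ 0 := fun h => hx (by rw [h]; rfl)
    have := hΨ.dualNorm_pos hσ
    positivity
  · have := Real.rpow_pos_of_pos (hΦ.dualNorm_pos hz) (2 * (α + 1))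
    positivity

theorem rho_pos (hΦ : IsMinkowskiNorm Φ) (hΨ : IsMinkowskiNorm Ψ) (hα : 0 < α)
    (hx : (z, σ) ≠ 0) : 0 < rho α Φ Ψ (z, σ) :=
  Real.rpow_pos_of_pos (rho_base_pos hΦ hΨ hα hx) _

theorem rho_rpow (hΦ : IsMinkowskiNorm Φ) (hα : 0 < α)
    (z : Euc m) (σ : Euc k) :
    rho α Φ Ψ (z, σ) ^ (2 * (α + 1)) =
      dualNorm Φ z ^ (2 * (α + 1)) + 4 * (α + 1) ^ 2 * dualNorm Ψ σ ^ 2 := by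
  have := Real.rpow_nonneg (hΦ.dualNorm_nonneg z) (2 * (α + 1))
  rw [rho, ← Real.rpow_mul (by positivity), one_div_mul_cancel (by positivity), Real.rpow_one]

theorem hasGradientAt_rho_fst (hΦ : IsMinkowskiNorm Φ) (hΨ : IsMinkowskiNorm Ψ) (hα : 0 < α)
    (hx : (z, σ) ≠ 0) :
    HasGradientAt (fun w => rho α Φ Ψ (w, σ))
      ((rho α Φ Ψ (z, σ) ^ (1 - 2 * (α + 1)) * dualNorm Φ z ^ (2 * α + 1)) •
        gradient (dualNorm Φ) z) z := by
  have h := ((hΦ.hasGradientAt_dualNorm_rpow (p := 2 * (α + 1)) (by linarith) z).add_const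
    (4 * (α + 1) ^ 2 * dualNorm Ψ σ ^ 2)).rpow_one_div (rho_base_pos hΦ hΨ hα hx)
    (p := 2 * (α + 1)) (by positivity)
  rw [smul_smul] at h
  unfold rho
  convert h using 2
  rw [show 2 * (α + 1) - 1 = 2 * α + 1 by ring]
  generalize (_ : ℝ) ^ (1 - 2 * (α + 1)) = X
  field_simp

theorem hasGradientAt_rho_snd (hΦ : IsMinkowskiNorm Φ) (hΨ : IsMinkowskiNorm Ψ) (hα : 0 < α)
    (hx : (z, σ) ≠ 0) :
    HasGradientAt (fun τ => rho α Φ Ψ (z, τ))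
      ((4 * (α + 1) * rho α Φ Ψ (z, σ) ^ (1 - 2 * (α + 1)) * dualNorm Ψ σ) •
        gradient (dualNorm Ψ) σ) σ := by
  have h := (((hΨ.hasGradientAt_dualNorm_sq σ).const_mul (4 * (α + 1) ^ 2)).const_add
    (dualNorm Φ z ^ (2 * (α + 1)))).rpow_one_div (rho_base_pos hΦ hΨ hα hx)
    (p := 2 * (α + 1)) (by positivity)
  rw [smul_smul, smul_smul] at h
  unfold rho
  convert h using 2
  generalize (_ : ℝ) ^ (1 - 2 * (α + 1)) = X
  field_simp

theorem smul_gradient_gradZ_rho (hΦ : IsMinkowskiNorm Φ) (hΨ : IsMinkowskiNorm Ψ) (hα : 0 < α)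
    (hx : (z, σ) ≠ 0) :
    Φ (gradZ (rho α Φ Ψ) (z, σ)) • gradient Φ (gradZ (rho α Φ Ψ) (z, σ)) =
      (rho α Φ Ψ (z, σ) ^ (1 - 2 * (α + 1)) * dualNorm Φ z ^ (2 * α)) • z := by
  have hg : gradZ (rho α Φ Ψ) (z, σ) =
      (rho α Φ Ψ (z, σ) ^ (1 - 2 * (α + 1)) * dualNorm Φ z ^ (2 * α) * dualNorm Φ z) •
        gradient (dualNorm Φ) z := by
    rw [gradZ, (hasGradientAt_rho_fst hΦ hΨ hα hx).gradient, mul_assoc,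
      ← Real.rpow_add_one' (hΦ.dualNorm_nonneg z) (by positivity)]
  rw [hg]
  exact hΦ.smul_gradient_smul_gradient_dualNorm (mul_nonneg
    (Real.rpow_nonneg (rho_pos hΦ hΨ hα hx).le _) (Real.rpow_nonneg (hΦ.dualNorm_nonneg z) _)) z

theorem smul_gradient_gradS_rho (hΦ : IsMinkowskiNorm Φ) (hΨ : IsMinkowskiNorm Ψ) (hα : 0 < α)
    (hx : (z, σ) ≠ 0) :
    Ψ (gradS (rho α Φ Ψ) (z, σ)) • gradient Ψ (gradS (rho α Φ Ψ) (z, σ)) =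
      (4 * (α + 1) * rho α Φ Ψ (z, σ) ^ (1 - 2 * (α + 1))) • σ := by
  rw [gradS, (hasGradientAt_rho_snd hΦ hΨ hα hx).gradient]
  exact hΨ.smul_gradient_smul_gradient_dualNorm (mul_nonneg (by linarith)
    (Real.rpow_nonneg (rho_pos hΦ hΨ hα hx).le _)) σ

end Gauge

section Laplacians

variable {α : ℝ} {Φ : Euc m → ℝ} {Ψ : Euc k → ℝ} {z : Euc m} {σ : Euc k}

theorem finslerLapZ_rho_eq_sum (hΦ : IsMinkowskiNorm Φ) (hΨ : IsMinkowskiNorm Ψ) (hα : 0 < α)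
    (hx : (z, σ) ≠ 0) :
    finslerLapZ Φ (rho α Φ Ψ) (z, σ) = ∑ i, fderiv ℝ (fun w : Euc m =>
      rho α Φ Ψ (w, σ) ^ (1 - 2 * (α + 1)) * dualNorm Φ w ^ (2 * α) * w i) z
        (EuclideanSpace.single i 1) := by
  have hev : ∀ᶠ w in 𝓝 z, (w, σ) ≠ (0 : Euc m × Euc k) :=
    (continuous_id.prodMk continuous_const).continuousAt.eventually_ne hx
  unfold finslerLapZ divZ
  refine Finset.sum_congr rfl fun i _ => ?_
  rw [Filter.EventuallyEq.fderiv_eq (hev.mono fun w hw => ?_)]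
  simp only [smul_gradient_gradZ_rho hΦ hΨ hα hw, PiLp.smul_apply, smul_eq_mul]

theorem finslerLapS_rho_eq_sum (hΦ : IsMinkowskiNorm Φ) (hΨ : IsMinkowskiNorm Ψ) (hα : 0 < α)
    (hx : (z, σ) ≠ 0) :
    finslerLapS Ψ (rho α Φ Ψ) (z, σ) = ∑ i, fderiv ℝ (fun τ : Euc k =>
      4 * (α + 1) * rho α Φ Ψ (z, τ) ^ (1 - 2 * (α + 1)) * τ i) σ
        (EuclideanSpace.single i 1) := by
  have hev : ∀ᶠ τ in 𝓝 σ, (z, τ) ≠ (0 : Euc m × Euc k) :=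
    (continuous_const.prodMk continuous_id).continuousAt.eventually_ne hx
  unfold finslerLapS divS
  refine Finset.sum_congr rfl fun i _ => ?_
  rw [Filter.EventuallyEq.fderiv_eq (hev.mono fun τ hτ => ?_)]
  simp only [smul_gradient_gradS_rho hΦ hΨ hα hτ, PiLp.smul_apply, smul_eq_mul]

theorem finslerLapZ_rho_of_fst_eq_zero (hΦ : IsMinkowskiNorm Φ) (hΨ : IsMinkowskiNorm Ψ)
    (hα : 0 < α) (hx : ((0 : Euc m), σ) ≠ 0) : finslerLapZ Φ (rho α Φ Ψ) (0, σ) = 0 := by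
  have ht := hΦ.continuous_dualNorm.tendsto 0
  have hρ : Tendsto (fun w => rho α Φ Ψ (w, σ)) (𝓝 0) (𝓝 (rho α Φ Ψ (0, σ))) :=
    ((ht.rpow_const (Or.inr (by positivity))).add_const _).rpow_const (Or.inr (by positivity))
  have hu : Tendsto (fun w => rho α Φ Ψ (w, σ) ^ (1 - 2 * (α + 1)) * dualNorm Φ w ^ (2 * α))
      (𝓝 0) (𝓝 0) := by
    simpa [dualNorm_zero, Real.zero_rpow (by positivity : 2 * α ≠ 0)] using
      (hρ.rpow_const (Or.inl (rho_pos hΦ hΨ hα hx).ne')).mul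
        (ht.rpow_const (Or.inr (by positivity : 0 ≤ 2 * α)))
  have hcoord (i : Fin m) : (fun w : Euc m => w i) =O[𝓝 0] fun w => w :=
    (EuclideanSpace.proj (𝕜 := ℝ) (ι := Fin m) i).isBigO_id _
  simp [finslerLapZ_rho_eq_sum hΦ hΨ hα hx,
    (hasFDerivAt_mul_of_tendsto_zero hu (hcoord _) rfl).fderiv]

theorem finslerLapZ_rho (hΦ : IsMinkowskiNorm Φ) (hΨ : IsMinkowskiNorm Ψ) (hα : 0 < α)
    (hx : (z, σ) ≠ 0) :
    finslerLapZ Φ (rho α Φ Ψ) (z, σ) =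
      rho α Φ Ψ (z, σ) ^ (1 - 2 * (α + 1)) * dualNorm Φ z ^ (2 * α) *
        (m + 2 * α + (1 - 2 * (α + 1)) * dualNorm Φ z ^ (2 * (α + 1)) /
          rho α Φ Ψ (z, σ) ^ (2 * (α + 1))) := by
  rcases eq_or_ne z 0 with rfl | hz
  · simp [finslerLapZ_rho_of_fst_eq_zero hΦ hΨ hα hx, dualNorm_zero,
      Real.zero_rpow (by positivity : 2 * α ≠ 0)]
  have hr := rho_pos hΦ hΨ hα hx
  have ht := hΦ.dualNorm_pos hz
  have hG := ((hasGradientAt_rho_fst hΦ hΨ hα hx).rpow_const (p := 1 - 2 * (α + 1))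
    (Or.inl hr.ne')).mul ((hΦ.hasGradientAt_dualNorm hz).rpow_const (p := 2 * α) (Or.inl ht.ne'))
  rw [finslerLapZ_rho_eq_sum hΦ hΨ hα hx, sum_fderiv_mul_apply_single hG]
  simp only [inner_add_left, real_inner_smul_left, hΦ.inner_gradient_dualNorm_self]
  rw [Real.rpow_sub_one ht.ne', Real.rpow_sub_one hr.ne', Real.rpow_add_one ht.ne',
    Real.rpow_sub hr, Real.rpow_one, show 2 * (α + 1) = 2 * α + 2 by ring,
    Real.rpow_add ht, Real.rpow_two]
  have hR := Real.rpow_pos_of_pos hr (2 * α + 2)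
  generalize rho α Φ Ψ (z, σ) ^ (2 * α + 2) = R at hR ⊢
  generalize dualNorm Φ z ^ (2 * α) = A
  field_simp
  ring

theorem finslerLapS_rho (hΦ : IsMinkowskiNorm Φ) (hΨ : IsMinkowskiNorm Ψ) (hα : 0 < α)
    (hx : (z, σ) ≠ 0) :
    finslerLapS Ψ (rho α Φ Ψ) (z, σ) =
      4 * (α + 1) * rho α Φ Ψ (z, σ) ^ (1 - 2 * (α + 1)) *
        (k + (1 - 2 * (α + 1)) * (4 * (α + 1) * dualNorm Ψ σ ^ 2) /
          rho α Φ Ψ (z, σ) ^ (2 * (α + 1))) := by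
  have hr := rho_pos hΦ hΨ hα hx
  have hG := ((hasGradientAt_rho_snd hΦ hΨ hα hx).rpow_const (p := 1 - 2 * (α + 1))
    (Or.inl hr.ne')).const_mul (4 * (α + 1))
  rw [finslerLapS_rho_eq_sum hΦ hΨ hα hx, sum_fderiv_mul_apply_single hG]
  simp only [real_inner_smul_left, hΨ.inner_gradient_dualNorm_self]
  rw [Real.rpow_sub_one hr.ne', Real.rpow_sub hr, Real.rpow_one]
  have hR := Real.rpow_pos_of_pos hr (2 * (α + 1))
  generalize rho α Φ Ψ (z, σ) ^ (2 * (α + 1)) = R at hR ⊢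
  field_simp

end Laplacians

theorem Lop2_of_rho_general (m k : ℕ) (α : ℝ) (hα : 0 < α)
    (Φ : Euc m → ℝ) (Ψ : Euc k → ℝ) (hΦ : IsMinkowskiNorm Φ) (hΨ : IsMinkowskiNorm Ψ)
    (Q : ℝ) (hQ : Q = (m : ℝ) + (α + 1) * (k : ℝ)) :
    ∀ x : Euc m × Euc k, x ≠ 0 →
      Lop2 α Φ Ψ (rho α Φ Ψ) x =
        (Q - 1) / rho α Φ Ψ x * (dualNorm Φ x.1 / rho α Φ Ψ x) ^ (2 * α) := by
  rintro ⟨z, σ⟩ hx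
  have hr := rho_pos hΦ hΨ hα hx
  have ht := hΦ.dualNorm_nonneg z
  have hρ := rho_rpow (Ψ := Ψ) hΦ hα z σ
  rw [Lop2, finslerLapZ_rho hΦ hΨ hα hx, finslerLapS_rho hΦ hΨ hα hx, hQ,
    Real.div_rpow ht hr.le, Real.rpow_sub hr, Real.rpow_one]
  rw [show 2 * (α + 1) = 2 * α + 2 by ring, Real.rpow_add hr, Real.rpow_two] at hρ ⊢
  rw [Real.rpow_add' ht (by positivity), Real.rpow_two] at hρ ⊢
  have hR := Real.rpow_pos_of_pos hr (2 * α)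
  generalize rho α Φ Ψ (z, σ) ^ (2 * α) = R at hR hρ ⊢
  generalize dualNorm Φ z ^ (2 * α) = A at hρ ⊢
  have hs : dualNorm Ψ σ ^ 2 = (R * rho α Φ Ψ (z, σ) ^ 2 - A * dualNorm Φ z ^ 2) /
      (4 * (α + 1) ^ 2) := by
    field_simp
    linarith
  rw [hs]
  field_simp
  ring

/-- `𝓛_{α,2}(ρ) = ((Q−1)/ρ)·(Φ⁰(z)/ρ)^{2α}` on `ℝ^N ∖ {0}`, where `Q = m + (α+1)k`. -/
theorem Lop2_of_rho (m k : ℕ) (hm : 1 ≤ m) (hk : 1 ≤ k) (α : ℝ) (hα : 0 < α)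
    (Φ : Euc m → ℝ) (Ψ : Euc k → ℝ) (hΦ : IsMinkowskiNorm Φ) (hΨ : IsMinkowskiNorm Ψ)
    (Q : ℝ) (hQ : Q = (m : ℝ) + (α + 1) * (k : ℝ)) :
    ∀ x : Euc m × Euc k, x ≠ 0 →
      Lop2 α Φ Ψ (rho α Φ Ψ) x =
        (Q - 1) / rho α Φ Ψ x * (dualNorm Φ x.1 / rho α Φ Ψ x) ^ (2 * α) :=
  Lop2_of_rho_general m k α hα Φ Ψ hΦ hΨ Q hQ
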